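/- Let Γ = (V,E) be a reduced finite simple graph and let π₁,π₂ ∈ Aut^π(Γ). Then α(π₁) = α(π₂) if and only if the right cosets Aut(Γ)π₁ and Aut(Γ)π₂ coincide; consequently the cardinality of the image of α equals the index |Aut^π(Γ)|/|Aut(Γ)|. Moreover, if Γ is connected and nonbipartite, then |Im(α)| equals the instability index Inst(Γ) = |Aut(BΓ)|/(2·|Aut(Γ)|). -/

import Mathlib

open SimpleGraph Pointwise

/-- A graph is reduced (vertex determining) if distinct vertices have distinct
open neighborhoods. -/
def Reduced {V : Type*} (G : SimpleGraph V) : Prop :=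
  ∀ u v : V, G.neighborSet u = G.neighborSet v → u = v

/-- The group of two-fold projections of a graph: permutations mapping every
open neighborhood onto some open neighborhood. -/
def autPi {V : Type*} [Fintype V] (G : SimpleGraph V) : Subgroup (Equiv.Perm V) where
  carrier := {π : Equiv.Perm V | ∀ v : V, ∃ w : V, π '' G.neighborSet v = G.neighborSet w}
  one_mem' := by
    intro v
    exact ⟨v, by simp⟩
  mul_mem' := by
    intro a b ha hb v
    obtain ⟨w, hw⟩ := hb v
    obtain ⟨u, hu⟩ := ha w
    refine ⟨u, ?_⟩
    rw [Equiv.Perm.coe_mul, Set.image_comp, hw, hu]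
  inv_mem' := by
    intro a ha v
    have hfin : (Set.range G.neighborSet).Finite := Set.finite_range _
    have hmaps : Set.MapsTo (Set.image ⇑a) (Set.range G.neighborSet)
        (Set.range G.neighborSet) := by
      rintro s ⟨u, rfl⟩
      obtain ⟨w, hw⟩ := ha u
      exact ⟨w, hw.symm⟩
    have hinj : Set.InjOn (Set.image ⇑a) (Set.range G.neighborSet) :=
      (Set.image_injective.mpr a.injective).injOn
    have hbij := (hfin.injOn_iff_bijOn_of_mapsTo hmaps).mp hinj
    obtain ⟨s, hs, hsv⟩ := hbij.surjOn ⟨v, rfl⟩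
    obtain ⟨w, rfl⟩ := hs
    refine ⟨w, ?_⟩
    have : (⇑a⁻¹) '' ((⇑a) '' G.neighborSet w) = G.neighborSet w := by
      rw [← Set.image_comp]
      simp
    rw [← this, hsv]

/-- The automorphism group of a graph, as a subgroup of the permutations of its vertices. -/
def autG {V : Type*} [Fintype V] (G : SimpleGraph V) : Subgroup (Equiv.Perm V) where
  carrier := {π : Equiv.Perm V | ∀ v w : V, G.Adj (π v) (π w) ↔ G.Adj v w}
  one_mem' := by intro v w; rfl
  mul_mem' := by
    intro a b ha hb v w
    rw [Equiv.Perm.coe_mul, Function.comp_apply, Function.comp_apply, ha, hb]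
  inv_mem' := by
    intro a ha v w
    have h1 : a (a⁻¹ v) = v := by simp
    have h2 : a (a⁻¹ w) = w := by simp
    conv_rhs => rw [← h1, ← h2]
    rw [ha]

/-- The canonical double cover (bipartite double cover) of a graph. -/
def doubleCover {V : Type*} (G : SimpleGraph V) : SimpleGraph (V × Bool) where
  Adj a b := G.Adj a.1 b.1 ∧ a.2 ≠ b.2
  symm := ⟨fun a b h => ⟨h.1.symm, h.2.symm⟩⟩
  loopless := ⟨fun a h => h.2 rfl⟩


/-!
Since `Γ` is reduced, `π (N v) = N (γ π v)` pins down `γ π`; hence `γ` is an endomorphism of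
`Aut^π(Γ)` whose fixed points are exactly the automorphisms of `Γ`. For any group
endomorphism `f`, `x⁻¹ f x = y⁻¹ f y` iff `y x⁻¹` is fixed by `f`, so the fibres of `α` are
the right cosets of `Aut(Γ)` and `|Aut^π(Γ)| = |Aut(Γ)| · |Im α|`.

When `Γ` is connected and nonbipartite, `BΓ` is connected, so each of its automorphisms either
preserves or swaps the two sheets `V × {i}`. On the sheets it acts by a pair of
permutations `(π, σ)` with `σ v ~ π w ↔ v ~ w`, which says precisely that `π ∈ Aut^π(Γ)` and
`σ = γ π`. Hence `|Aut(BΓ)| = 2 |Aut^π(Γ)|`.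
-/

theorem Subgroup.coe_mul_singleton_eq_iff {H : Type*} [Group H] (s : Subgroup H) (x y : H) :
    (s : Set H) * {x} = (s : Set H) * {y} ↔ y * x⁻¹ ∈ s := by
  simp only [← Set.image_op_smul, Set.image_singleton, Set.singleton_smul]
  exact rightCoset_eq_iff s

section FixedPoints
variable {H : Type*} [Group H] (f : H →* H)

theorem MonoidHom.inv_mul_apply_eq_iff (x y : H) :
    x⁻¹ * f x = y⁻¹ * f y ↔ y * x⁻¹ ∈ f.eqLocus (MonoidHom.id H) := by
  change _ ↔ f (y * x⁻¹) = y * x⁻¹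
  rw [map_mul, map_inv, mul_inv_eq_iff_eq_mul, eq_inv_mul_iff_mul_eq, mul_assoc, eq_comm]

theorem MonoidHom.card_eq_card_eqLocus_mul_card_range_inv_mul :
    Nat.card H =
      Nat.card (f.eqLocus (MonoidHom.id H)) * Nat.card (Set.range fun x => x⁻¹ * f x) := by
  have hker :
      Setoid.ker (fun x => x⁻¹ * f x) = QuotientGroup.rightRel (f.eqLocus (MonoidHom.id H)) :=
    Setoid.ext fun x y =>
      Setoid.ker_def.trans ((f.inv_mul_apply_eq_iff x y).trans QuotientGroup.rightRel_apply.symm)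
  rw [← Subgroup.card_mul_index, Subgroup.index_eq_card,
    ← Nat.card_congr (Setoid.quotientKerEquivRange _), hker,
    Nat.card_congr (QuotientGroup.quotientRightRelEquivQuotientLeftRel _)]

end FixedPoints

section NeighborSets
variable {V : Type*} {G : SimpleGraph V}

def MapsNeighborSets (G : SimpleGraph V) (π : Equiv.Perm V) (σ : V → V) : Prop :=
  ∀ v, π '' G.neighborSet v = G.neighborSet (σ v)

theorem image_neighborSet_eq_iff (π : Equiv.Perm V) (u v : V) :
    π '' G.neighborSet v = G.neighborSet u ↔ ∀ w, G.Adj u (π w) ↔ G.Adj v w := by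
  rw [Set.ext_iff, π.symm.forall_congr_left]
  simp only [Equiv.symm_symm, π.injective.mem_set_image, mem_neighborSet, Iff.comm]

theorem mapsNeighborSets_iff_adj {π : Equiv.Perm V} {σ : V → V} :
    MapsNeighborSets G π σ ↔ ∀ v w, G.Adj (σ v) (π w) ↔ G.Adj v w :=
  forall_congr' fun v => image_neighborSet_eq_iff π (σ v) v

theorem MapsNeighborSets.unique (hred : Reduced G) {π : Equiv.Perm V} {σ σ' : V → V}
    (h : MapsNeighborSets G π σ) (h' : MapsNeighborSets G π σ') : σ = σ' :=
  funext fun v => hred _ _ ((h v).symm.trans (h' v))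

theorem MapsNeighborSets.mul {π π' : Equiv.Perm V} {σ σ' : V → V}
    (h : MapsNeighborSets G π σ) (h' : MapsNeighborSets G π' σ') :
    MapsNeighborSets G (π * π') (σ ∘ σ') := by
  intro v
  rw [Equiv.Perm.coe_mul, Set.image_comp, h', h, Function.comp_apply]

variable [Fintype V]

theorem MapsNeighborSets.mem_autPi {π : Equiv.Perm V} {σ : V → V}
    (h : MapsNeighborSets G π σ) : π ∈ autPi G :=
  fun v => ⟨σ v, h v⟩

theorem mem_autG_iff_mapsNeighborSets {σ : Equiv.Perm V} :
    σ ∈ autG G ↔ MapsNeighborSets G σ σ :=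
  mapsNeighborSets_iff_adj.symm

theorem autG_le_autPi : autG G ≤ autPi G :=
  fun _ hσ => (mem_autG_iff_mapsNeighborSets.mp hσ).mem_autPi

end NeighborSets

section Gamma
variable {V : Type*} [Fintype V] {G : SimpleGraph V} {γ : autPi G → autPi G}

def gammaHom (hred : Reduced G)
    (hγ : ∀ π : autPi G, MapsNeighborSets G π (γ π)) : autPi G →* autPi G :=
  MonoidHom.mk' γ fun π π' =>
    Subtype.ext <| Equiv.ext <| congrFun <| (hγ (π * π')).unique hred ((hγ π).mul (hγ π'))

theorem mem_eqLocus_gammaHom_iff (hred : Reduced G)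
    (hγ : ∀ π : autPi G, MapsNeighborSets G π (γ π)) (π : autPi G) :
    π ∈ (gammaHom hred hγ).eqLocus (MonoidHom.id _) ↔ (π : Equiv.Perm V) ∈ autG G := by
  rw [mem_autG_iff_mapsNeighborSets]
  change γ π = π ↔ _
  constructor
  · intro h
    simpa only [h] using hγ π
  · exact fun h => Subtype.ext <| Equiv.ext <| congrFun <| (hγ π).unique hred h

theorem inv_mul_gamma_eq_iff (hred : Reduced G)
    (hγ : ∀ π : autPi G, MapsNeighborSets G π (γ π)) (π₁ π₂ : autPi G) :
    π₁⁻¹ * γ π₁ = π₂⁻¹ * γ π₂ ↔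
      ((π₂ * π₁⁻¹ : autPi G) : Equiv.Perm V) ∈ autG G :=
  ((gammaHom hred hγ).inv_mul_apply_eq_iff π₁ π₂).trans (mem_eqLocus_gammaHom_iff hred hγ _)

theorem card_autPi_eq_card_autG_mul (hred : Reduced G)
    (hγ : ∀ π : autPi G, MapsNeighborSets G π (γ π)) :
    Nat.card (autPi G) =
      Nat.card (autG G) * Nat.card (Set.range fun π : autPi G => π⁻¹ * γ π) := by
  have hfix : (gammaHom hred hγ).eqLocus (MonoidHom.id _) = (autG G).subgroupOf (autPi G) := by
    ext π
    rw [Subgroup.mem_subgroupOf, mem_eqLocus_gammaHom_iff]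
  rw [(gammaHom hred hγ).card_eq_card_eqLocus_mul_card_range_inv_mul, hfix,
    Nat.card_congr (Subgroup.subgroupOfEquivOfLe autG_le_autPi).toEquiv]
  rfl

end Gamma

section DoubleCover
variable {V : Type*} {G : SimpleGraph V}

theorem doubleCover_reachable_of_walk {u w : V} (p : G.Walk u w) (i : Bool) :
    (doubleCover G).Reachable (u, i) (w, i ^^ decide (Odd p.length)) := by
  induction p generalizing i with
  | nil => simp
  | @cons u v w h q ih =>
    have hstep : (doubleCover G).Adj (u, i) (v, !i) := ⟨h, by simp⟩
    simp only [Walk.length_cons, Nat.odd_add_one, decide_not, Bool.xor_not, ← Bool.not_xor]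
    exact hstep.reachable.trans (ih !i)

theorem doubleCover_connected (hconn : G.Connected)
    (hodd : ∃ (v : V) (c : G.Walk v v), Odd c.length) : (doubleCover G).Connected := by
  obtain ⟨v₀, c, ⟨k, hk⟩⟩ := hodd
  have hflip : ∀ u i, (doubleCover G).Reachable (u, i) (u, !i) := by
    intro u i
    obtain ⟨r⟩ := hconn.preconnected u v₀
    have hlen : Odd (r.append (c.append r.reverse)).length :=
      ⟨k + r.length, by simp only [Walk.length_append, Walk.length_reverse]; omega⟩
    have := doubleCover_reachable_of_walk (r.append (c.append r.reverse)) i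
    rwa [decide_eq_true hlen, Bool.xor_true] at this
  have hsheets : ∀ u i j, (doubleCover G).Reachable (u, i) (u, j) := by
    intro u i j
    rcases Bool.eq_or_eq_not j i with rfl | rfl
    · rfl
    · exact hflip u i
  obtain ⟨v⟩ := hconn.nonempty
  have : Nonempty (V × Bool) := ⟨(v, false)⟩
  refine ⟨fun ⟨u, i⟩ ⟨w, j⟩ => ?_⟩
  obtain ⟨q⟩ := hconn.preconnected u w
  exact (doubleCover_reachable_of_walk q i).trans (hsheets w _ j)

theorem exists_snd_apply_eq_xor (hBG : (doubleCover G).Connected)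
    (φ : doubleCover G ≃g doubleCover G) : ∃ b, ∀ x, (φ x).2 = (b ^^ x.2) := by
  obtain ⟨x₀⟩ := hBG.nonempty
  have hadj : ∀ {x y}, (doubleCover G).Adj x y → ((φ x).2 ^^ x.2) = ((φ y).2 ^^ y.2) := by
    intro x y hxy
    have key : ∀ a b c d : Bool, a ≠ b → c ≠ d → (c ^^ a) = (d ^^ b) := by decide
    exact key _ _ _ _ hxy.2 (φ.map_rel_iff.mpr hxy).2
  have hconst : ∀ x, ((φ x₀).2 ^^ x₀.2) = ((φ x).2 ^^ x.2) := by
    intro x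
    have hreach := hBG.preconnected x₀ x
    rw [reachable_eq_reflTransGen] at hreach
    induction hreach with
    | refl => rfl
    | tail _ hyz ih => exact ih.trans (hadj hyz)
  refine ⟨(φ x₀).2 ^^ x₀.2, fun x => ?_⟩
  rw [hconst, Bool.xor_assoc, Bool.xor_self, Bool.xor_false]

def doubleCoverIso {π σ : Equiv.Perm V} (h : MapsNeighborSets G π σ) (b : Bool) :
    doubleCover G ≃g doubleCover G where
  toFun x := (cond x.2 (π x.1) (σ x.1), b ^^ x.2)
  invFun x := (cond (b ^^ x.2) (π.symm x.1) (σ.symm x.1), b ^^ x.2)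
  left_inv := by rintro ⟨v, i⟩; cases b <;> cases i <;> simp
  right_inv := by rintro ⟨v, i⟩; cases b <;> cases i <;> simp
  map_rel_iff' := by
    rintro ⟨v, i⟩ ⟨w, j⟩
    have hadj := mapsNeighborSets_iff_adj.mp h
    have hadj' : ∀ v w, G.Adj (π v) (σ w) ↔ G.Adj v w := fun v w => by
      rw [G.adj_comm, hadj, G.adj_comm]
    cases i <;> cases j <;> cases b <;> simp [doubleCover, hadj, hadj']

theorem exists_doubleCoverIso_eq [Finite V] (hBG : (doubleCover G).Connected)
    (φ : doubleCover G ≃g doubleCover G) :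
    ∃ (π σ : Equiv.Perm V) (h : MapsNeighborSets G π σ) (b : Bool),
      φ = doubleCoverIso h b := by
  obtain ⟨b, hb⟩ := exists_snd_apply_eq_xor hBG φ
  have hinj : ∀ i, Function.Injective fun v => (φ (v, i)).1 := by
    intro i v w hvw
    have : φ (v, i) = φ (w, i) := Prod.ext hvw (by rw [hb, hb])
    exact congrArg Prod.fst (φ.injective this)
  let sheet (i : Bool) : Equiv.Perm V :=
    Equiv.ofBijective _ (Finite.injective_iff_bijective.mp (hinj i))
  have hφ : ∀ x, φ x = (cond x.2 (sheet true x.1) (sheet false x.1), b ^^ x.2) := by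
    rintro ⟨v, i⟩
    cases i <;> exact Prod.ext rfl (hb _)
  have h : MapsNeighborSets G (sheet true) (sheet false) := by
    refine mapsNeighborSets_iff_adj.mpr fun v w => ?_
    have := φ.map_rel_iff (a := (v, false)) (b := (w, true))
    rw [hφ, hφ] at this
    simpa [doubleCover] using this
  exact ⟨_, _, h, b, RelIso.ext hφ⟩

theorem card_doubleCover_iso [Fintype V] (hred : Reduced G) {γ : autPi G → autPi G}
    (hγ : ∀ π : autPi G, MapsNeighborSets G π (γ π)) (hBG : (doubleCover G).Connected) :
    Nat.card (doubleCover G ≃g doubleCover G) = 2 * Nat.card (autPi G) := by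
  obtain ⟨⟨v, -⟩⟩ := hBG.nonempty
  let Φ (p : autPi G × Bool) : doubleCover G ≃g doubleCover G := doubleCoverIso (hγ p.1) p.2
  have hinj : Function.Injective Φ := by
    rintro ⟨π, b⟩ ⟨π', b'⟩ hΦ
    have hb : b = b' := by
      simpa [Φ, doubleCoverIso] using congrArg (fun φ => (φ (v, true)).2) hΦ
    have hπ : π = π' := Subtype.ext <| Equiv.ext fun w => by
      simpa [Φ, doubleCoverIso] using congrArg (fun φ => (φ (w, true)).1) hΦ
    rw [hb, hπ]
  have hsurj : Function.Surjective Φ := by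
    intro φ
    obtain ⟨π, σ, h, b, rfl⟩ := exists_doubleCoverIso_eq hBG φ
    have hσ : ⇑(γ ⟨π, h.mem_autPi⟩ : Equiv.Perm V) = σ := (hγ _).unique hred h
    exact ⟨(⟨π, h.mem_autPi⟩, b), RelIso.ext fun x => by simp [Φ, doubleCoverIso, hσ]⟩
  rw [← Nat.card_congr (Equiv.ofBijective Φ ⟨hinj, hsurj⟩), Nat.card_prod,
    Nat.card_eq_fintype_card (α := Bool), Fintype.card_bool, mul_comm]

end DoubleCover

/-- For a reduced graph Γ: α(π₁) = α(π₂) iff the right cosets Aut(Γ)π₁, Aut(Γ)π₂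
coincide; hence |Im α| = |Aut^π(Γ)| / |Aut(Γ)|; and if moreover Γ is connected and
nonbipartite, |Im α| equals the instability index |Aut(BΓ)| / (2·|Aut(Γ)|). -/
theorem stmt_2 {V : Type*} [Fintype V] (G : SimpleGraph V) (hred : Reduced G)
    (γ : autPi G → autPi G)
    (hγ : ∀ (π : autPi G) (v : V),
      (π : Equiv.Perm V) '' G.neighborSet v = G.neighborSet ((γ π : Equiv.Perm V) v)) :
    (∀ π₁ π₂ : autPi G,
      π₁⁻¹ * γ π₁ = π₂⁻¹ * γ π₂ ↔
        (autG G : Set (Equiv.Perm V)) * {(π₁ : Equiv.Perm V)} =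
          (autG G : Set (Equiv.Perm V)) * {(π₂ : Equiv.Perm V)}) ∧
    Nat.card (Set.range fun π : autPi G => π⁻¹ * γ π) =
      Nat.card (autPi G) / Nat.card (autG G) ∧
    Nat.card (autPi G) =
      Nat.card (autG G) * Nat.card (Set.range fun π : autPi G => π⁻¹ * γ π) ∧
    (G.Connected → (∃ (v : V) (p : G.Walk v v), Odd p.length) →
      Nat.card ((doubleCover G) ≃g (doubleCover G)) =
        2 * Nat.card (autG G) * Nat.card (Set.range fun π : autPi G => π⁻¹ * γ π)) := by
  have hcard := card_autPi_eq_card_autG_mul hred hγ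
  refine ⟨fun π₁ π₂ => ?_, ?_, hcard, fun hconn hodd => ?_⟩
  · rw [inv_mul_gamma_eq_iff hred hγ, Subgroup.coe_mul_singleton_eq_iff]
    rfl
  · rw [hcard, Nat.mul_div_cancel_left _ Nat.card_pos]
  · rw [card_doubleCover_iso hred hγ (doubleCover_connected hconn hodd), hcard, mul_assoc]
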